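/- arXiv:1612.07072 — 2 statements merged into one kernel-verified Lean document; each statement's English description precedes it below -/
import Mathlib

section
/- Let E and S be measurable spaces, μ a probability measure on E, κ : E → S a measurable map, and k : E × S → S a jointly measurable map. Let ν be the pushforward of μ under κ, and assume K is a Markov kernel from S to S such that for every x ∈ S, K(x) equals the pushforward of μ under u ↦ k(u, x). Fix T ≥ 1 and bounded measurable functions f₁,...,f_T : S → ℝ≥0, and define X_t : E^T → S recursively by X₁(u) = κ(u₁) and X_t(u) = k(u_t, X_{t−1}(u)) for 2 ≤ t ≤ T. Then the integral of ∏_{t=1}^T f_t(X_t(u)) with respect to the T-fold product measure μ^{⊗T} on E^T equals the iterated integral ∫_S f₁(x₁) ∫_S f₂(x₂) ⋯ ∫_S f_T(x_T) dK(x_{T−1})(x_T) ⋯ dK(x₁)(x₂) dν(x₁); that is, the likelihood of a state space model computed from the disturbance representation equals the likelihood computed from the state representation. -/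
open MeasureTheory ProbabilityTheory ENNReal

noncomputable def stateIter {S : Type*} [MeasurableSpace S]
    (K : ProbabilityTheory.Kernel S S) (f : ℕ → S → ℝ≥0∞) : ℕ → ℕ → S → ℝ≥0∞
  | 0, t, x => f t x
  | (m + 1), t, x => f t x * ∫⁻ y, stateIter K f m (t + 1) y ∂(K x)

lemma stateIter_absorb {S : Type*} [MeasurableSpace S]
    (K : ProbabilityTheory.Kernel S S) (f : ℕ → S → ℝ≥0∞) :
    ∀ m t x, stateIter K f (m + 1) t x =
      stateIter K
        (fun s => if s = t + m then (fun y => f s y * ∫⁻ z, f (s + 1) z ∂(K y)) else f s)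
        m t x := by
  intro m
  induction m with
  | zero => intro t x; simp [stateIter]
  | succ m ih =>
    intro t x
    have h1 : stateIter K f (m + 1 + 1) t x
        = f t x * ∫⁻ y, stateIter K f (m + 1) (t + 1) y ∂(K x) := rfl
    rw [h1]
    have h2 : ∀ y, stateIter K f (m + 1) (t + 1) y =
        stateIter K
          (fun s => if s = t + (m + 1) then (fun y => f s y * ∫⁻ z, f (s + 1) z ∂(K y)) else f s)
          m (t + 1) y := by
      intro y
      rw [ih (t + 1) y]
      have hte : t + 1 + m = t + (m + 1) := by omega
      rw [hte]
    simp_rw [h2]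
    have h3 : stateIter K
          (fun s => if s = t + (m + 1) then (fun y => f s y * ∫⁻ z, f (s + 1) z ∂(K y)) else f s)
          (m + 1) t x
        = (if t = t + (m + 1) then (fun y => f t y * ∫⁻ z, f (t + 1) z ∂(K y)) else f t) x
          * ∫⁻ y, stateIter K
            (fun s => if s = t + (m + 1) then (fun y => f s y * ∫⁻ z, f (s + 1) z ∂(K y)) else f s)
            m (t + 1) y ∂(K x) := rfl
    rw [h3, if_neg (by omega)]

-- measurability of X
lemma X_meas {E S : Type*} [MeasurableSpace E] [MeasurableSpace S]
    {κ : E → S} (hκ : Measurable κ) {k : E × S → S} (hk : Measurable k)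
    {T : ℕ} (X : (Fin T → E) → ℕ → S)
    (hX1 : ∀ u, ∀ h : 0 < T, X u 1 = κ (u ⟨0, h⟩))
    (hXt : ∀ u, ∀ t, 2 ≤ t → t ≤ T → ∀ h : t - 1 < T, X u t = k (u ⟨t - 1, h⟩, X u (t - 1))) :
    ∀ t, 1 ≤ t → t ≤ T → Measurable (fun u => X u t) := by
  intro t
  induction t with
  | zero => omega
  | succ s ih =>
    intro h1 h2
    rcases Nat.eq_or_lt_of_le h1 with h | h
    · have h0 : 0 < T := by omega
      have : (fun u : Fin T → E => X u (s + 1)) = fun u => κ (u ⟨0, h0⟩) := by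
        funext u
        have hs : s + 1 = 1 := h.symm
        rw [hs]
        exact hX1 u h0
      rw [this]
      exact hκ.comp (measurable_pi_apply _)
    · have hs1 : 1 ≤ s := by omega
      have hsT : s < T := by omega
      have : (fun u : Fin T → E => X u (s + 1))
          = fun u => k (u ⟨s, hsT⟩, X u s) := by
        funext u
        have := hXt u (s + 1) (by omega) h2 (by simpa using hsT)
        simpa using this
      rw [this]
      exact hk.comp ((measurable_pi_apply _).prodMk (ih hs1 (by omega)))

-- X u t depends only on coordinates < t
lemma X_dep {E S : Type*} [MeasurableSpace E] [MeasurableSpace S]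
    {κ : E → S} {k : E × S → S}
    {T : ℕ} (X : (Fin T → E) → ℕ → S)
    (hX1 : ∀ u, ∀ h : 0 < T, X u 1 = κ (u ⟨0, h⟩))
    (hXt : ∀ u, ∀ t, 2 ≤ t → t ≤ T → ∀ h : t - 1 < T, X u t = k (u ⟨t - 1, h⟩, X u (t - 1))) :
    ∀ t, 1 ≤ t → t ≤ T → ∀ u v : Fin T → E, (∀ i : Fin T, (i : ℕ) < t → u i = v i) →
      X u t = X v t := by
  intro t
  induction t with
  | zero => omega
  | succ s ih =>
    intro h1 h2 u v huv
    rcases Nat.eq_or_lt_of_le h1 with h | h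
    · have h0 : 0 < T := by omega
      have hs : s + 1 = 1 := h.symm
      rw [hs, hX1 u h0, hX1 v h0, huv _ (by simp)]
    · have hsT : s < T := by omega
      have h1' := hXt u (s + 1) (by omega) h2 (by simpa using hsT)
      have h2' := hXt v (s + 1) (by omega) h2 (by simpa using hsT)
      simp only [Nat.add_sub_cancel] at h1' h2'
      rw [h1', h2', huv _ (by simp), ih (by omega) (by omega) u v
        (fun i hi => huv i (by omega))]

lemma aux_main {E S : Type*} [MeasurableSpace E] [MeasurableSpace S]
    (μ : Measure E) [IsProbabilityMeasure μ]
    (κ : E → S) (hκ : Measurable κ)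
    (k : E × S → S) (hk : Measurable k)
    (K : ProbabilityTheory.Kernel S S) [ProbabilityTheory.IsMarkovKernel K]
    (hK : ∀ x : S, K x = Measure.map (fun u => k (u, x)) μ) :
    ∀ n (f : ℕ → S → ℝ≥0∞), (∀ t, Measurable (f t)) →
    ∀ (X : (Fin (n + 1) → E) → ℕ → S),
    (∀ u, X u 1 = κ (u 0)) →
    (∀ u, ∀ t, 2 ≤ t → t ≤ n + 1 → ∀ h : t - 1 < n + 1, X u t = k (u ⟨t - 1, h⟩, X u (t - 1))) →
    ∫⁻ u, ∏ t ∈ Finset.Icc 1 (n + 1), f t (X u t) ∂(Measure.pi fun _ : Fin (n + 1) => μ)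
      = ∫⁻ x, stateIter K f n 1 x ∂(Measure.map κ μ) := by
  intro n
  induction n with
  | zero =>
    intro f hfm X hX1 hXt
    simp only [Finset.Icc_self, Finset.prod_singleton]
    have h1 : ∀ u : Fin 1 → E, f 1 (X u 1) = f 1 (κ (u 0)) := fun u => by rw [hX1]
    simp_rw [h1]
    have hsi : ∀ x, stateIter K f 0 1 x = f 1 x := fun x => rfl
    simp_rw [hsi]
    rw [lintegral_map (hfm 1) hκ]
    have hmp : MeasurePreserving (MeasurableEquiv.funUnique (Fin 1) E)
        (Measure.pi fun _ : Fin 1 => μ) μ := by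
      exact MeasureTheory.measurePreserving_funUnique μ (Fin 1)
    rw [show (∫⁻ a, f 1 (κ a) ∂μ) = _ from hmp.lintegral_map_equiv (fun e => f 1 (κ e))]
    refine lintegral_congr fun u => ?_
    congr 1
  | succ n ih =>
    intro f hfm X hX1 hXt
    -- E is nonempty
    have hne : Nonempty E := by
      by_contra h
      have h0 : (Set.univ : Set E) = ∅ := by
        ext x; exact absurd ⟨x⟩ h
      have h1 := measure_univ (μ := μ)
      rw [h0] at h1
      simp at h1
    obtain ⟨e₀⟩ := hne
    -- snoc coordinate lemmas
    have hsnoc_lt : ∀ (v : Fin (n + 1) → E) (c : E) (i : Fin (n + 2)) (hi : (i : ℕ) < n + 1),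
        (Fin.snoc v c : Fin (n + 2) → E) i = v ⟨i, hi⟩ := by
      intro v c i hi
      simp [Fin.snoc, hi]
      rfl
    -- reformulated hypotheses for helper lemmas
    have hX1' : ∀ u : Fin (n + 2) → E, ∀ h : 0 < n + 2, X u 1 = κ (u ⟨0, h⟩) := by
      intro u h
      have h0 : (0 : Fin (n + 2)) = ⟨0, h⟩ := rfl
      rw [hX1 u, h0]
    have hXmeas := X_meas hκ hk X hX1' hXt
    have hXdep := X_dep (κ := κ) (k := k) X hX1' hXt
    -- X' : the restricted process
    set X' : (Fin (n + 1) → E) → ℕ → S := fun v t => X (Fin.snoc v e₀) t with hX'def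
    have hX'eq : ∀ (v : Fin (n + 1) → E) (c : E) (t : ℕ), 1 ≤ t → t ≤ n + 1 →
        X (Fin.snoc v c) t = X' v t := by
      intro v c t h1 h2
      refine hXdep t h1 (by omega) _ _ fun i hi => ?_
      have hi' : (i : ℕ) < n + 1 := by omega
      rw [hsnoc_lt v c i hi', hsnoc_lt v e₀ i hi']
    have hX'1 : ∀ v : Fin (n + 1) → E, X' v 1 = κ (v 0) := by
      intro v
      have := hX1 (Fin.snoc v e₀)
      rw [hX'def]
      simp only
      rw [this, hsnoc_lt v e₀ 0 (by simp)]
      rfl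
    have hX't : ∀ v : Fin (n + 1) → E, ∀ t, 2 ≤ t → t ≤ n + 1 → ∀ h : t - 1 < n + 1,
        X' v t = k (v ⟨t - 1, h⟩, X' v (t - 1)) := by
      intro v t h2 hle h
      have := hXt (Fin.snoc v e₀) t h2 (by omega) (by omega)
      rw [hX'def]
      simp only
      rw [this, hsnoc_lt v e₀ ⟨t - 1, by omega⟩ h]
    have hX'meas := X_meas hκ hk X'
      (fun v h => by rw [hX'1 v]; rfl)
      hX't
    -- the modified density g
    set g : ℕ → S → ℝ≥0∞ := fun s =>
      if s = n + 1 then (fun y => f s y * ∫⁻ z, f (s + 1) z ∂(K y)) else f s with hgdef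
    have hKint_meas : Measurable fun y => ∫⁻ z, f (n + 2) z ∂(K y) :=
      Measurable.lintegral_kernel_prod_right' ((hfm (n + 2)).comp measurable_snd)
    have hgm : ∀ t, Measurable (g t) := by
      intro t
      rw [hgdef]
      by_cases ht : t = n + 1
      · simp only [ht, if_pos rfl]
        subst ht
        exact (hfm (n + 1)).mul hKint_meas
      · simp only [if_neg ht]; exact hfm t
    -- the splitting equivalence
    set e : (Fin (n + 2) → E) ≃ᵐ E × (Fin (n + 1) → E) :=
      MeasurableEquiv.piFinSuccAbove (fun _ : Fin (n + 2) => E) (Fin.last (n + 1)) with hedef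
    have hmp : MeasurePreserving e (Measure.pi fun _ : Fin (n + 2) => μ)
        (μ.prod (Measure.pi fun _ : Fin (n + 1) => μ)) :=
      measurePreserving_piFinSuccAbove (fun _ : Fin (n + 2) => μ) (Fin.last (n + 1))
    have hesymm : ∀ (p : E × (Fin (n + 1) → E)), e.symm p = Fin.snoc p.2 p.1 := by
      intro p
      rw [hedef]
      simp only [MeasurableEquiv.piFinSuccAbove_symm_apply]
      exact Fin.insertNth_last' p.1 p.2
    set F : (Fin (n + 2) → E) → ℝ≥0∞ := fun u => ∏ t ∈ Finset.Icc 1 (n + 2), f t (X u t)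
      with hFdef
    have hFm : Measurable F := by
      refine Finset.measurable_prod _ fun t ht => ?_
      simp only [Finset.mem_Icc] at ht
      exact (hfm t).comp (hXmeas t ht.1 ht.2)
    have step1 : ∫⁻ u, F u ∂(Measure.pi fun _ : Fin (n + 2) => μ)
        = ∫⁻ p, F (e.symm p) ∂(μ.prod (Measure.pi fun _ : Fin (n + 1) => μ)) :=
      (hmp.symm e).lintegral_map_equiv F
    have step2 : ∫⁻ p, F (e.symm p) ∂(μ.prod (Measure.pi fun _ : Fin (n + 1) => μ))
        = ∫⁻ v, ∫⁻ c, F (e.symm (c, v)) ∂μ ∂(Measure.pi fun _ : Fin (n + 1) => μ) :=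
      lintegral_prod_symm' _ (hFm.comp e.symm.measurable)
    -- compute the inner integral
    have hlast : ∀ (v : Fin (n + 1) → E) (c : E),
        X (Fin.snoc v c) (n + 2) = k (c, X' v (n + 1)) := by
      intro v c
      have h := hXt (Fin.snoc v c) (n + 2) (by omega) le_rfl (by omega)
      rw [h]
      congr 1
      have : (⟨n + 2 - 1, by omega⟩ : Fin (n + 2)) = Fin.last (n + 1) := rfl
      rw [this, Fin.snoc_last]
      exact congrArg _ (hX'eq v c (n + 1) (by omega) le_rfl)
    have hFval : ∀ (v : Fin (n + 1) → E) (c : E),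
        F (e.symm (c, v)) = (∏ t ∈ Finset.Icc 1 (n + 1), f t (X' v t))
          * f (n + 2) (k (c, X' v (n + 1))) := by
      intro v c
      rw [hesymm, hFdef]
      simp only
      rw [Finset.prod_Icc_succ_top (by omega : 1 ≤ n + 2)]
      congr 1
      · refine Finset.prod_congr rfl fun t ht => ?_
        simp only [Finset.mem_Icc] at ht
        rw [hX'eq v c t ht.1 ht.2]
      · rw [hlast]
    have hinner : ∀ v : Fin (n + 1) → E,
        ∫⁻ c, F (e.symm (c, v)) ∂μ
          = ∏ t ∈ Finset.Icc 1 (n + 1), g t (X' v t) := by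
      intro v
      simp_rw [hFval]
      have hgmeas : Measurable fun c : E => k (c, X' v (n + 1)) :=
        hk.comp (measurable_id.prodMk measurable_const)
      have hmeas_c : Measurable fun c : E => f (n + 2) (k (c, X' v (n + 1))) :=
        (hfm (n + 2)).comp hgmeas
      rw [lintegral_const_mul _ hmeas_c]
      have hmap : ∫⁻ c, f (n + 2) (k (c, X' v (n + 1))) ∂μ
          = ∫⁻ z, f (n + 2) z ∂(K (X' v (n + 1))) := by
        rw [hK (X' v (n + 1)), lintegral_map (hfm (n + 2)) hgmeas]
      rw [hmap]
      -- now split products at n+1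
      rw [Finset.prod_Icc_succ_top (by omega : 1 ≤ n + 1),
        Finset.prod_Icc_succ_top (by omega : 1 ≤ n + 1)]
      have hg_top : g (n + 1) (X' v (n + 1))
          = f (n + 1) (X' v (n + 1)) * ∫⁻ z, f (n + 2) z ∂(K (X' v (n + 1))) := by
        rw [hgdef]; simp
      have hg_lo : ∀ t ∈ Finset.Icc 1 n, g t (X' v t) = f t (X' v t) := by
        intro t ht
        simp only [Finset.mem_Icc] at ht
        rw [hgdef]
        simp only [if_neg (by omega : ¬ t = n + 1)]
      rw [hg_top, Finset.prod_congr rfl hg_lo]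
      ring
    -- put everything together
    calc ∫⁻ u, ∏ t ∈ Finset.Icc 1 (n + 2), f t (X u t) ∂(Measure.pi fun _ : Fin (n + 2) => μ)
        = ∫⁻ v, ∫⁻ c, F (e.symm (c, v)) ∂μ ∂(Measure.pi fun _ : Fin (n + 1) => μ) := by
          rw [← step2, ← step1]
      _ = ∫⁻ v, ∏ t ∈ Finset.Icc 1 (n + 1), g t (X' v t)
            ∂(Measure.pi fun _ : Fin (n + 1) => μ) := by
          exact lintegral_congr hinner
      _ = ∫⁻ x, stateIter K g n 1 x ∂(Measure.map κ μ) := by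
          exact ih g hgm X' hX'1 hX't
      _ = ∫⁻ x, stateIter K f (n + 1) 1 x ∂(Measure.map κ μ) := by
          refine lintegral_congr fun x => ?_
          rw [stateIter_absorb K f n 1 x]
          have : (fun s => if s = 1 + n then (fun y => f s y * ∫⁻ z, f (s + 1) z ∂(K y)) else f s)
              = g := by
            rw [hgdef]
            funext s
            by_cases hs : s = n + 1
            · rw [if_pos (by omega), if_pos hs]
            · rw [if_neg (by omega), if_neg hs]
          rw [← this]

/-- Proposition 1: the likelihood computed from the disturbance representation of a
state space model equals the likelihood computed from the state representation. -/
theorem disturbance_likelihood_eq_state_likelihood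
    {E S : Type*} [MeasurableSpace E] [MeasurableSpace S]
    (μ : Measure E) [IsProbabilityMeasure μ]
    (κ : E → S) (hκ : Measurable κ)
    (k : E × S → S) (hk : Measurable k)
    (K : ProbabilityTheory.Kernel S S) [ProbabilityTheory.IsMarkovKernel K]
    (hK : ∀ x : S, K x = Measure.map (fun u => k (u, x)) μ)
    (T : ℕ) (hT : 1 ≤ T)
    (f : ℕ → S → ℝ≥0∞) (hfm : ∀ t, Measurable (f t))
    (hfb : ∀ t, ∃ C : ℝ≥0∞, C < ∞ ∧ ∀ x, f t x ≤ C)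
    (X : (Fin T → E) → ℕ → S)
    (hX1 : ∀ u, X u 1 = κ (u ⟨0, by omega⟩))
    (hXt : ∀ u, ∀ t, ∀ (_ : 2 ≤ t) (_ : t ≤ T), X u t = k (u ⟨t - 1, by omega⟩, X u (t - 1))) :
    ∫⁻ u, ∏ t ∈ Finset.Icc 1 T, f t (X u t) ∂(Measure.pi fun _ : Fin T => μ)
      = ∫⁻ x, stateIter K f (T - 1) 1 x ∂(Measure.map κ μ) := by
  obtain ⟨n, rfl⟩ : ∃ n, T = n + 1 := ⟨T - 1, by omega⟩
  exact aux_main μ κ hκ k hk K hK n f hfm X hX1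
    (fun u t h2 hT h => by
      have := hXt u t h2 hT
      convert this using 3)
end

section
/- Let Θ and 𝒰 be measurable spaces, p_Θ a probability measure on Θ (the prior) and p_U a probability measure on 𝒰, and let L̂ : Θ × 𝒰 → ℝ≥0 be measurable. Define L(θ) := ∫ L̂(θ, u) dp_U(u) and Z := ∫ L(θ) dp_Θ(θ), and assume 0 < Z < ∞. Then the measure π̄ on Θ × 𝒰 defined by π̄(A) = Z⁻¹ ∫_A L̂(θ, u) d(p_Θ ⊗ p_U)(θ, u) is a probability measure, and its marginal on Θ (pushforward under the first projection) equals the posterior π, i.e., the measure with density L(θ)/Z with respect to p_Θ. -/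
open MeasureTheory ProbabilityTheory ENNReal

/-- Correctness of the pseudo-marginal construction: the joint pseudo target
`π̄(dθ, du) = Z⁻¹ L̂(θ, u) p_Θ(dθ) p_U(du)` is a probability measure whose marginal
on `Θ` is the posterior, i.e. the measure with density `L(θ)/Z` with respect to the
prior `p_Θ`, where `L(θ) = ∫ L̂(θ, u) p_U(du)` and `Z = ∫ L(θ) p_Θ(dθ)`. -/
theorem pseudo_marginal_target_correct
    {Θ 𝒰 : Type*} [MeasurableSpace Θ] [MeasurableSpace 𝒰]
    (pΘ : Measure Θ) [IsProbabilityMeasure pΘ]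
    (pU : Measure 𝒰) [IsProbabilityMeasure pU]
    (Lhat : Θ × 𝒰 → ℝ≥0∞) (hLhat : Measurable Lhat)
    (L : Θ → ℝ≥0∞) (hLdef : ∀ θ, L θ = ∫⁻ u, Lhat (θ, u) ∂pU)
    (Z : ℝ≥0∞) (hZdef : Z = ∫⁻ θ, L θ ∂pΘ) (hZpos : 0 < Z) (hZfin : Z < ∞) :
    IsProbabilityMeasure (Z⁻¹ • (pΘ.prod pU).withDensity Lhat)
    ∧ (Z⁻¹ • (pΘ.prod pU).withDensity Lhat).map Prod.fst
        = pΘ.withDensity (fun θ => L θ / Z) := by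
  have hLmeas : Measurable L := by
    rw [funext hLdef]; exact hLhat.lintegral_prod_right'
  have key : ((pΘ.prod pU).withDensity Lhat).map Prod.fst = pΘ.withDensity L := by
    ext s hs
    rw [Measure.map_apply measurable_fst hs, withDensity_apply _ (measurable_fst hs),
      withDensity_apply _ hs]
    have hpre : (Prod.fst ⁻¹' s : Set (Θ × 𝒰)) = s ×ˢ Set.univ := by
      ext x; simp
    rw [hpre, ← Measure.prod_restrict s Set.univ, Measure.restrict_univ,
      lintegral_prod _ hLhat.aemeasurable]
    exact lintegral_congr fun θ => (hLdef θ).symm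
  have hmass : ((pΘ.prod pU).withDensity Lhat) Set.univ = Z := by
    rw [withDensity_apply _ MeasurableSet.univ, Measure.restrict_univ,
      lintegral_prod _ hLhat.aemeasurable, hZdef]
    exact lintegral_congr fun θ => (hLdef θ).symm
  refine ⟨⟨?_⟩, ?_⟩
  · rw [Measure.smul_apply, hmass, smul_eq_mul, ENNReal.inv_mul_cancel hZpos.ne' hZfin.ne]
  · rw [Measure.map_smul, key]
    rw [show (fun θ => L θ / Z) = Z⁻¹ • L by
      funext θ; simp [div_eq_mul_inv, mul_comm, Pi.smul_apply, smul_eq_mul]]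
    rw [withDensity_smul _ hLmeas]
end
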